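/- Let P be an SP-graded Kantor pair over 𝕂. Define the reflection P̌ by P̌^σ = P₀^{−σ} ⊕ P₁^σ (σ = ±) with σ-product {a₀ + a₁, b₀ + b₁, c₀ + c₁}^∨ = {a₀, b₀, c₀} − {b₁, a₁, c₀} + K(a₀, b₁)c₁ + {a₁, b₁, c₁} − {b₀, a₀, c₁} + K(a₁, b₀)c₀, where a₀, c₀ ∈ P₀^{−σ}, a₁, c₁ ∈ P₁^σ, b₀ ∈ P₀^σ, b₁ ∈ P₁^{−σ}, and the products and K-operators on the right are those of P. Then P̌ is a Kantor pair, and setting P̌₀^σ = P₀^{−σ}, P̌₁^σ = P₁^σ defines an SP-grading of P̌. -/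

import Mathlib

/-- A Kantor pair over `K`: a pair of modules `(Pm, Pp)` (for `P⁻`, `P⁺`) with trilinear
products `tm : P⁻ × P⁺ × P⁻ → P⁻` and `tp : P⁺ × P⁻ × P⁺ → P⁺` satisfying the Kantor
identities (K1) and (K2). -/
structure KantorPair (K : Type*) [CommRing K] (Pm Pp : Type*)
    [AddCommGroup Pm] [AddCommGroup Pp] [Module K Pm] [Module K Pp] where
  tm : Pm → Pp → Pm → Pm
  tp : Pp → Pm → Pp → Pp
  tm_add₁ : ∀ x x' y z, tm (x + x') y z = tm x y z + tm x' y z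
  tm_smul₁ : ∀ (a : K) x y z, tm (a • x) y z = a • tm x y z
  tm_add₂ : ∀ x y y' z, tm x (y + y') z = tm x y z + tm x y' z
  tm_smul₂ : ∀ (a : K) x y z, tm x (a • y) z = a • tm x y z
  tm_add₃ : ∀ x y z z', tm x y (z + z') = tm x y z + tm x y z'
  tm_smul₃ : ∀ (a : K) x y z, tm x y (a • z) = a • tm x y z
  tp_add₁ : ∀ x x' y z, tp (x + x') y z = tp x y z + tp x' y z
  tp_smul₁ : ∀ (a : K) x y z, tp (a • x) y z = a • tp x y z
  tp_add₂ : ∀ x y y' z, tp x (y + y') z = tp x y z + tp x y' z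
  tp_smul₂ : ∀ (a : K) x y z, tp x (a • y) z = a • tp x y z
  tp_add₃ : ∀ x y z z', tp x y (z + z') = tp x y z + tp x y z'
  tp_smul₃ : ∀ (a : K) x y z, tp x y (a • z) = a • tp x y z
  k1m : ∀ (x z u : Pm) (y w : Pp),
    tm x y (tm z w u) - tm z w (tm x y u) = tm (tm x y z) w u - tm z (tp y x w) u
  k1p : ∀ (x z u : Pp) (y w : Pm),
    tp x y (tp z w u) - tp z w (tp x y u) = tp (tp x y z) w u - tp z (tm y x w) u
  k2m : ∀ (x z u : Pm) (w v : Pp),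
    (tm x (tp w u v) z - tm z (tp w u v) x) + tm u w (tm x v z - tm z v x)
      = tm (tm x w z - tm z w x) v u - tm u v (tm x w z - tm z w x)
  k2p : ∀ (x z u : Pp) (w v : Pm),
    (tp x (tm w u v) z - tp z (tm w u v) x) + tp u w (tp x v z - tp z v x)
      = tp (tp x w z - tp z w x) v u - tp u v (tp x w z - tp z w x)

namespace KantorPair

variable {K : Type*} [CommRing K] {Pm Pp : Type*}
  [AddCommGroup Pm] [AddCommGroup Pp] [Module K Pm] [Module K Pp]

/-- `Q = (Qm, Qp)` is an ideal of the Kantor pair: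
`{P,P,Q} + {P,Q,P} + {Q,P,P} ⊆ Q` on each side. -/
def IsIdealPair (KP : KantorPair K Pm Pp) (Qm : Submodule K Pm) (Qp : Submodule K Pp) : Prop :=
  (∀ (x z : Pm) (y : Pp) (q : Pm), q ∈ Qm → KP.tm x y q ∈ Qm ∧ KP.tm q y z ∈ Qm) ∧
  (∀ (x z : Pm) (r : Pp), r ∈ Qp → KP.tm x r z ∈ Qm) ∧
  (∀ (x z : Pp) (y : Pm) (q : Pp), q ∈ Qp → KP.tp x y q ∈ Qp ∧ KP.tp q y z ∈ Qp) ∧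
  (∀ (x z : Pp) (r : Pm), r ∈ Qm → KP.tp x r z ∈ Qp)

/-- A Kantor pair is simple if some product is nonzero and its only ideals are `0` and `P`. -/
def IsSimplePair (KP : KantorPair K Pm Pp) : Prop :=
  ((∃ x y z, KP.tm x y z ≠ 0) ∨ (∃ x y z, KP.tp x y z ≠ 0)) ∧
  ∀ Qm Qp, KP.IsIdealPair Qm Qp → (Qm = ⊥ ∧ Qp = ⊥) ∨ (Qm = ⊤ ∧ Qp = ⊤)

/-- `(ωm, ωp)` belongs to the centroid of the Kantor pair. -/
def InCentroid (KP : KantorPair K Pm Pp) (ωm : Pm →ₗ[K] Pm) (ωp : Pp →ₗ[K] Pp) : Prop :=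
  (∀ x y z, ωm (KP.tm x y z) = KP.tm (ωm x) y z ∧
      ωm (KP.tm x y z) = KP.tm x (ωp y) z ∧ ωm (KP.tm x y z) = KP.tm x y (ωm z)) ∧
  (∀ x y z, ωp (KP.tp x y z) = KP.tp (ωp x) y z ∧
      ωp (KP.tp x y z) = KP.tp x (ωm y) z ∧ ωp (KP.tp x y z) = KP.tp x y (ωp z))

/-- The Kantor pair is central: `a ↦ (a • id, a • id)` is an isomorphism of `K`
onto the centroid. -/
def IsCentralPair (KP : KantorPair K Pm Pp) : Prop :=
  (∀ ωm ωp, KP.InCentroid ωm ωp →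
    ∃ a : K, ωm = a • (LinearMap.id : Pm →ₗ[K] Pm) ∧ ωp = a • (LinearMap.id : Pp →ₗ[K] Pp)) ∧
  ∀ a : K, a • (LinearMap.id : Pm →ₗ[K] Pm) = 0 →
    a • (LinearMap.id : Pp →ₗ[K] Pp) = 0 → a = 0

/-- A Jordan pair is a Kantor pair with vanishing K-operators, i.e. symmetric products. -/
def IsJordanPair (KP : KantorPair K Pm Pp) : Prop :=
  (∀ (x z : Pm) (y : Pp), KP.tm x y z = KP.tm z y x) ∧
  (∀ (x z : Pp) (y : Pm), KP.tp x y z = KP.tp z y x)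

end KantorPair

/-- A 5-grading (= BC₁-grading) of a Lie algebra `L` over `K`:
an internal direct sum decomposition `L = ⊕_{i ∈ ℤ} L_i` with `⁅L_i, L_j⁆ ⊆ L_{i+j}`
and `L_i = 0` for `|i| > 2`. -/
structure FiveGrading (K : Type*) [CommRing K] (L : Type*) [LieRing L] [LieAlgebra K L] where
  g : ℤ → Submodule K L
  internal : DirectSum.IsInternal g
  lie_mem : ∀ (i j : ℤ) (x y : L), x ∈ g i → y ∈ g j → ⁅x, y⁆ ∈ g (i + j)
  vanish : ∀ i : ℤ, 2 < |i| → g i = ⊥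

/-- `T_L(P) = L_{-1} ⊕ L_1` as a submodule of `L`. -/
def Tsub {K : Type*} [CommRing K] {L : Type*} [LieRing L] [LieAlgebra K L]
    (fg : FiveGrading K L) : Submodule K L :=
  fg.g (-1) ⊔ fg.g 1

/-- The span of all brackets `⁅x, y⁆` with `x ∈ U`, `y ∈ V`. -/
def brkSpan (K : Type*) [CommRing K] {L : Type*} [LieRing L] [LieAlgebra K L]
    (U V : Submodule K L) : Submodule K L :=
  Submodule.span K {w : L | ∃ x ∈ U, ∃ y ∈ V, w = ⁅x, y⁆}

/-- A 5-graded Lie algebra `L` tightly envelops the Kantor pair `(L_{-1}, L_1)` if it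
is generated as a Lie algebra by `T = L_{-1} ⊕ L_1` and `Z(L) ∩ [T, T] = 0`. -/
def Tight (K : Type*) [CommRing K] {L : Type*} [LieRing L] [LieAlgebra K L]
    (fg : FiveGrading K L) : Prop :=
  LieSubalgebra.lieSpan K L ↑(Tsub fg) = ⊤ ∧
  ∀ z ∈ brkSpan K (Tsub fg) (Tsub fg), (∀ u : L, ⁅z, u⁆ = 0) → z = 0

/-- A 5-graded Lie algebra `(L, fg)` envelops a Kantor pair `KP`: there are identifications
of `P⁻` with `L_{-1}` and `P⁺` with `L_1` under which the products of `KP` are the products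
`⁅⁅x, y⁆, z⁆` of `L`. -/
structure Envelops {K : Type*} [CommRing K] {Pm Pp : Type*}
    [AddCommGroup Pm] [AddCommGroup Pp] [Module K Pm] [Module K Pp]
    (KP : KantorPair K Pm Pp)
    {L : Type*} [LieRing L] [LieAlgebra K L] (fg : FiveGrading K L) where
  em : Pm →ₗ[K] L
  ep : Pp →ₗ[K] L
  inj_m : Function.Injective em
  inj_p : Function.Injective ep
  range_m : LinearMap.range em = fg.g (-1)
  range_p : LinearMap.range ep = fg.g 1
  compat_m : ∀ (x z : Pm) (y : Pp), em (KP.tm x y z) = ⁅⁅em x, ep y⁆, em z⁆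
  compat_p : ∀ (x z : Pp) (y : Pm), ep (KP.tp x y z) = ⁅⁅ep x, em y⁆, ep z⁆

/-- A short Peirce grading (SP-grading) of a Kantor pair: a `ℤ`-grading with support
contained in `{0, 1}`. -/
structure SPGrading {K : Type*} [CommRing K] {Pm Pp : Type*}
    [AddCommGroup Pm] [AddCommGroup Pp] [Module K Pm] [Module K Pp]
    (KP : KantorPair K Pm Pp) where
  Qm : ℤ → Submodule K Pm
  Qp : ℤ → Submodule K Pp
  sup_m : Qm 0 ⊔ Qm 1 = ⊤
  disj_m : Disjoint (Qm 0) (Qm 1)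
  sup_p : Qp 0 ⊔ Qp 1 = ⊤
  disj_p : Disjoint (Qp 0) (Qp 1)
  vanish_m : ∀ i : ℤ, i ≠ 0 → i ≠ 1 → Qm i = ⊥
  vanish_p : ∀ i : ℤ, i ≠ 0 → i ≠ 1 → Qp i = ⊥
  grade_m : ∀ (i j k : ℤ) (x : Pm) (y : Pp) (z : Pm),
    x ∈ Qm i → y ∈ Qp j → z ∈ Qm k → KP.tm x y z ∈ Qm (i - j + k)
  grade_p : ∀ (i j k : ℤ) (x : Pp) (y : Pm) (z : Pp),
    x ∈ Qp i → y ∈ Qm j → z ∈ Qp k → KP.tp x y z ∈ Qp (i - j + k)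

/-- `KPc` is the reflection `P̌` of the SP-graded Kantor pair `(KP, SP)`:
`P̌^σ = P₀^{-σ} ⊕ P₁^σ`, with products given by the reflection formula. -/
def IsReflection {K : Type*} [CommRing K] {Pm Pp : Type*}
    [AddCommGroup Pm] [AddCommGroup Pp] [Module K Pm] [Module K Pp]
    (KP : KantorPair K Pm Pp) (SP : SPGrading KP)
    (KPc : KantorPair K ((SP.Qp 0) × (SP.Qm 1)) ((SP.Qm 0) × (SP.Qp 1))) : Prop :=
  (∀ (a c : (SP.Qm 0) × (SP.Qp 1)) (b : (SP.Qp 0) × (SP.Qm 1)),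
    ((KPc.tp a b c).1 : Pm)
      = KP.tm a.1 b.1 c.1 - KP.tm b.2 a.2 c.1 + (KP.tm a.1 c.2 b.2 - KP.tm b.2 c.2 a.1) ∧
    ((KPc.tp a b c).2 : Pp)
      = KP.tp a.2 b.2 c.2 - KP.tp b.1 a.1 c.2 + (KP.tp a.2 c.1 b.1 - KP.tp b.1 c.1 a.2)) ∧
  (∀ (a c : (SP.Qp 0) × (SP.Qm 1)) (b : (SP.Qm 0) × (SP.Qp 1)),
    ((KPc.tm a b c).1 : Pp)
      = KP.tp a.1 b.1 c.1 - KP.tp b.2 a.2 c.1 + (KP.tp a.1 c.2 b.2 - KP.tp b.2 c.2 a.1) ∧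
    ((KPc.tm a b c).2 : Pm)
      = KP.tm a.2 b.2 c.2 - KP.tm b.1 a.1 c.2 + (KP.tm a.2 c.1 b.1 - KP.tm b.1 c.1 a.2))

/-- The degree-`i` component of the SP-grading of the reflection, on the `-` side
(`P̌₀⁻ = P₀⁺`, `P̌₁⁻ = P₁⁻`). -/
def RefGradM {K : Type*} [CommRing K] {Pm Pp : Type*}
    [AddCommGroup Pm] [AddCommGroup Pp] [Module K Pm] [Module K Pp]
    {KP : KantorPair K Pm Pp} (SP : SPGrading KP) :
    ℤ → Submodule K ((SP.Qp 0) × (SP.Qm 1)) := fun i =>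
  if i = 0 then (⊤ : Submodule K (SP.Qp 0)).prod ⊥
  else if i = 1 then (⊥ : Submodule K (SP.Qp 0)).prod ⊤
  else ⊥

/-- The degree-`i` component of the SP-grading of the reflection, on the `+` side
(`P̌₀⁺ = P₀⁻`, `P̌₁⁺ = P₁⁺`). -/
def RefGradP {K : Type*} [CommRing K] {Pm Pp : Type*}
    [AddCommGroup Pm] [AddCommGroup Pp] [Module K Pm] [Module K Pp]
    {KP : KantorPair K Pm Pp} (SP : SPGrading KP) :
    ℤ → Submodule K ((SP.Qm 0) × (SP.Qp 1)) := fun i =>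
  if i = 0 then (⊤ : Submodule K (SP.Qm 0)).prod ⊥
  else if i = 1 then (⊥ : Submodule K (SP.Qm 0)).prod ⊤
  else ⊥

/-!
Write the elements of `P̌` through their homogeneous components in `P₀` and `P₁`. Each component of
the identities (K1) and (K2) for `P̌` is then an identity between products in `P` in which every
product of degree `0 - 1 + 0 = -1` or `1 - 0 + 1 = 2` vanishes by the SP-grading; modulo these, it
is a signed sum of instances of (K1) and (K2) in `P`. The grading of `P̌` is read off from the
degrees of the terms in the reflection formula.
-/

namespace KantorPair

variable {K : Type*} [CommRing K] {Pm Pp : Type*}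
  [AddCommGroup Pm] [AddCommGroup Pp] [Module K Pm] [Module K Pp]

def swap (KP : KantorPair K Pm Pp) : KantorPair K Pp Pm where
  tm := KP.tp
  tp := KP.tm
  tm_add₁ := KP.tp_add₁
  tm_smul₁ := KP.tp_smul₁
  tm_add₂ := KP.tp_add₂
  tm_smul₂ := KP.tp_smul₂
  tm_add₃ := KP.tp_add₃
  tm_smul₃ := KP.tp_smul₃
  tp_add₁ := KP.tm_add₁
  tp_smul₁ := KP.tm_smul₁
  tp_add₂ := KP.tm_add₂
  tp_smul₂ := KP.tm_smul₂
  tp_add₃ := KP.tm_add₃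
  tp_smul₃ := KP.tm_smul₃
  k1m := KP.k1p
  k1p := KP.k1m
  k2m := KP.k2p
  k2p := KP.k2m

variable (KP : KantorPair K Pm Pp)

attribute [simp] tm_add₁ tm_add₂ tm_add₃ tm_smul₁ tm_smul₂ tm_smul₃
attribute [simp] tp_add₁ tp_add₂ tp_add₃ tp_smul₁ tp_smul₂ tp_smul₃

@[simp] lemma swap_tm : KP.swap.tm = KP.tp := rfl
@[simp] lemma swap_tp : KP.swap.tp = KP.tm := rfl

@[simp] lemma tm_zero₁ (y : Pp) (z : Pm) : KP.tm 0 y z = 0 := by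
  simpa using KP.tm_smul₁ 0 0 y z

@[simp] lemma tm_zero₂ (x : Pm) (z : Pm) : KP.tm x 0 z = 0 := by
  simpa using KP.tm_smul₂ 0 x 0 z

@[simp] lemma tm_zero₃ (x : Pm) (y : Pp) : KP.tm x y 0 = 0 := by
  simpa using KP.tm_smul₃ 0 x y 0

@[simp] lemma tm_sub₁ (x x' : Pm) (y : Pp) (z : Pm) :
    KP.tm (x - x') y z = KP.tm x y z - KP.tm x' y z := by
  rw [eq_sub_iff_add_eq, ← KP.tm_add₁, sub_add_cancel]

@[simp] lemma tm_sub₂ (x : Pm) (y y' : Pp) (z : Pm) :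
    KP.tm x (y - y') z = KP.tm x y z - KP.tm x y' z := by
  rw [eq_sub_iff_add_eq, ← KP.tm_add₂, sub_add_cancel]

@[simp] lemma tm_sub₃ (x : Pm) (y : Pp) (z z' : Pm) :
    KP.tm x y (z - z') = KP.tm x y z - KP.tm x y z' := by
  rw [eq_sub_iff_add_eq, ← KP.tm_add₃, sub_add_cancel]

@[simp] lemma tp_zero₁ (y : Pm) (z : Pp) : KP.tp 0 y z = 0 := KP.swap.tm_zero₁ y z
@[simp] lemma tp_zero₂ (x : Pp) (z : Pp) : KP.tp x 0 z = 0 := KP.swap.tm_zero₂ x z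
@[simp] lemma tp_zero₃ (x : Pp) (y : Pm) : KP.tp x y 0 = 0 := KP.swap.tm_zero₃ x y

@[simp] lemma tp_sub₁ (x x' : Pp) (y : Pm) (z : Pp) :
    KP.tp (x - x') y z = KP.tp x y z - KP.tp x' y z := KP.swap.tm_sub₁ x x' y z

@[simp] lemma tp_sub₂ (x : Pp) (y y' : Pm) (z : Pp) :
    KP.tp x (y - y') z = KP.tp x y z - KP.tp x y' z := KP.swap.tm_sub₂ x y y' z

@[simp] lemma tp_sub₃ (x : Pp) (y : Pm) (z z' : Pp) :
    KP.tp x y (z - z') = KP.tp x y z - KP.tp x y z' := KP.swap.tm_sub₃ x y z z'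

/-- The `P₀⁻`-component of the reflected product `{a₀ + a₁, b₀ + b₁, c₀ + c₁}^∨`. -/
def reflTp₀ (a₀ : Pm) (a₁ : Pp) (b₀ : Pp) (b₁ : Pm) (c₀ : Pm) (c₁ : Pp) : Pm :=
  KP.tm a₀ b₀ c₀ - KP.tm b₁ a₁ c₀ + (KP.tm a₀ c₁ b₁ - KP.tm b₁ c₁ a₀)

/-- The `P₁⁺`-component of the reflected product `{a₀ + a₁, b₀ + b₁, c₀ + c₁}^∨`. -/
def reflTp₁ (a₀ : Pm) (a₁ : Pp) (b₀ : Pp) (b₁ : Pm) (c₀ : Pm) (c₁ : Pp) : Pp :=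
  KP.tp a₁ b₁ c₁ - KP.tp b₀ a₀ c₁ + (KP.tp a₁ c₀ b₀ - KP.tp b₀ c₀ a₁)

end KantorPair

namespace SPGrading

variable {K : Type*} [CommRing K] {Pm Pp : Type*}
  [AddCommGroup Pm] [AddCommGroup Pp] [Module K Pm] [Module K Pp]
  {KP : KantorPair K Pm Pp} (SP : SPGrading KP)

def swap : SPGrading KP.swap where
  Qm := SP.Qp
  Qp := SP.Qm
  sup_m := SP.sup_p
  disj_m := SP.disj_p
  sup_p := SP.sup_m
  disj_p := SP.disj_m
  vanish_m := SP.vanish_p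
  vanish_p := SP.vanish_m
  grade_m := SP.grade_p
  grade_p := SP.grade_m

@[simp] lemma tm_deg_010_eq_zero (x z : SP.Qm 0) (y : SP.Qp 1) : KP.tm x y z = 0 := by
  simpa [SP.vanish_m (-1)] using SP.grade_m 0 1 0 x y z x.2 y.2 z.2

@[simp] lemma tp_deg_101_eq_zero (x z : SP.Qp 1) (y : SP.Qm 0) : KP.tp x y z = 0 := by
  simpa [SP.vanish_p 2] using SP.grade_p 1 0 1 x y z x.2 y.2 z.2

lemma reflTp₀_mem (a₀ : SP.Qm 0) (a₁ : SP.Qp 1) (b₀ : SP.Qp 0) (b₁ : SP.Qm 1) (c₀ : SP.Qm 0)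
    (c₁ : SP.Qp 1) : KP.reflTp₀ a₀ a₁ b₀ b₁ c₀ c₁ ∈ SP.Qm 0 := by
  have h₁ := SP.grade_m 0 0 0 _ _ _ a₀.2 b₀.2 c₀.2
  have h₂ := SP.grade_m 1 1 0 _ _ _ b₁.2 a₁.2 c₀.2
  have h₃ := SP.grade_m 0 1 1 _ _ _ a₀.2 c₁.2 b₁.2
  have h₄ := SP.grade_m 1 1 0 _ _ _ b₁.2 c₁.2 a₀.2
  norm_num at h₁ h₂ h₃ h₄
  exact add_mem (sub_mem h₁ h₂) (sub_mem h₃ h₄)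

lemma reflTp₁_mem (a₀ : SP.Qm 0) (a₁ : SP.Qp 1) (b₀ : SP.Qp 0) (b₁ : SP.Qm 1) (c₀ : SP.Qm 0)
    (c₁ : SP.Qp 1) : KP.reflTp₁ a₀ a₁ b₀ b₁ c₀ c₁ ∈ SP.Qp 1 := by
  have h₁ := SP.grade_p 1 1 1 _ _ _ a₁.2 b₁.2 c₁.2
  have h₂ := SP.grade_p 0 0 1 _ _ _ b₀.2 a₀.2 c₁.2
  have h₃ := SP.grade_p 1 0 0 _ _ _ a₁.2 c₀.2 b₀.2
  have h₄ := SP.grade_p 0 0 1 _ _ _ b₀.2 c₀.2 a₁.2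
  norm_num at h₁ h₂ h₃ h₄
  exact add_mem (sub_mem h₁ h₂) (sub_mem h₃ h₄)

/-- The `+`-product of the reflection `P̌`; its `-`-product is `SP.swap.reflTp`. -/
def reflTp (a : SP.Qm 0 × SP.Qp 1) (b : SP.Qp 0 × SP.Qm 1) (c : SP.Qm 0 × SP.Qp 1) :
    SP.Qm 0 × SP.Qp 1 :=
  (⟨KP.reflTp₀ a.1 a.2 b.1 b.2 c.1 c.2, SP.reflTp₀_mem a.1 a.2 b.1 b.2 c.1 c.2⟩,
   ⟨KP.reflTp₁ a.1 a.2 b.1 b.2 c.1 c.2, SP.reflTp₁_mem a.1 a.2 b.1 b.2 c.1 c.2⟩)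


lemma reflTp_add₁ (a a' : SP.Qm 0 × SP.Qp 1) (b : SP.Qp 0 × SP.Qm 1) (c : SP.Qm 0 × SP.Qp 1) :
    SP.reflTp (a + a') b c = SP.reflTp a b c + SP.reflTp a' b c := by
  ext <;> simp [reflTp, KantorPair.reflTp₀, KantorPair.reflTp₁] <;> abel

lemma reflTp_add₂ (a : SP.Qm 0 × SP.Qp 1) (b b' : SP.Qp 0 × SP.Qm 1) (c : SP.Qm 0 × SP.Qp 1) :
    SP.reflTp a (b + b') c = SP.reflTp a b c + SP.reflTp a b' c := by
  ext <;> simp [reflTp, KantorPair.reflTp₀, KantorPair.reflTp₁] <;> abel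

lemma reflTp_add₃ (a : SP.Qm 0 × SP.Qp 1) (b : SP.Qp 0 × SP.Qm 1) (c c' : SP.Qm 0 × SP.Qp 1) :
    SP.reflTp a b (c + c') = SP.reflTp a b c + SP.reflTp a b c' := by
  ext <;> simp [reflTp, KantorPair.reflTp₀, KantorPair.reflTp₁] <;> abel

lemma reflTp_smul₁ (t : K) (a : SP.Qm 0 × SP.Qp 1) (b : SP.Qp 0 × SP.Qm 1)
    (c : SP.Qm 0 × SP.Qp 1) : SP.reflTp (t • a) b c = t • SP.reflTp a b c := by
  ext <;> simp [reflTp, KantorPair.reflTp₀, KantorPair.reflTp₁, smul_sub]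

lemma reflTp_smul₂ (t : K) (a : SP.Qm 0 × SP.Qp 1) (b : SP.Qp 0 × SP.Qm 1)
    (c : SP.Qm 0 × SP.Qp 1) : SP.reflTp a (t • b) c = t • SP.reflTp a b c := by
  ext <;> simp [reflTp, KantorPair.reflTp₀, KantorPair.reflTp₁, smul_sub]

lemma reflTp_smul₃ (t : K) (a : SP.Qm 0 × SP.Qp 1) (b : SP.Qp 0 × SP.Qm 1)
    (c : SP.Qm 0 × SP.Qp 1) : SP.reflTp a b (t • c) = t • SP.reflTp a b c := by
  ext <;> simp [reflTp, KantorPair.reflTp₀, KantorPair.reflTp₁, smul_sub]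

lemma reflTp_k1 (x z u : SP.Qm 0 × SP.Qp 1) (y w : SP.Qp 0 × SP.Qm 1) :
    SP.reflTp x y (SP.reflTp z w u) - SP.reflTp z w (SP.reflTp x y u)
      = SP.reflTp (SP.reflTp x y z) w u - SP.reflTp z (SP.swap.reflTp y x w) u := by
  obtain ⟨x₀, x₁⟩ := x
  obtain ⟨z₀, z₁⟩ := z
  obtain ⟨u₀, u₁⟩ := u
  obtain ⟨y₀, y₁⟩ := y
  obtain ⟨w₀, w₁⟩ := w
  ext
  · linear_combination (norm := (simp [reflTp, KantorPair.reflTp₀, KantorPair.reflTp₁]; abel))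
      (KP.k1m ↑x₀ ↑z₀ ↑u₀ ↑y₀ ↑w₀) - (KP.k2m ↑x₀ ↑y₁ ↑u₀ ↑w₀ ↑z₁) + (KP.k2m ↑x₀ ↑y₁ ↑u₀ ↑z₁ ↑w₀)
      - (KP.k1m ↑y₁ ↑z₀ ↑u₀ ↑x₁ ↑w₀) - (KP.k1m ↑u₀ ↑w₁ ↑x₀ ↑y₀ ↑z₁) + (KP.k2m ↑u₀ ↑w₁ ↑x₀ ↑y₀ ↑z₁)
      + (KP.k1m ↑u₀ ↑x₀ ↑w₁ ↑y₀ ↑z₁) - (KP.k2m ↑u₀ ↑x₀ ↑w₁ ↑y₀ ↑z₁) + (KP.k1m ↑w₁ ↑u₀ ↑x₀ ↑y₀ ↑z₁)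
      - (KP.k1m ↑w₁ ↑x₀ ↑u₀ ↑y₀ ↑z₁) + (KP.k2m ↑w₁ ↑x₀ ↑u₀ ↑y₀ ↑z₁) - (KP.k1m ↑x₀ ↑u₀ ↑w₁ ↑y₀ ↑z₁)
      + (KP.k1m ↑u₀ ↑w₁ ↑z₀ ↑x₁ ↑y₀) - (KP.k2m ↑u₀ ↑w₁ ↑z₀ ↑x₁ ↑y₀) - (KP.k1m ↑u₀ ↑w₁ ↑z₀ ↑y₀ ↑x₁)
      + (KP.k2m ↑u₀ ↑w₁ ↑z₀ ↑y₀ ↑x₁) - (KP.k1m ↑u₀ ↑z₀ ↑w₁ ↑x₁ ↑y₀) + (KP.k2m ↑u₀ ↑z₀ ↑w₁ ↑x₁ ↑y₀)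
      + (KP.k1m ↑u₀ ↑z₀ ↑w₁ ↑y₀ ↑x₁) - (KP.k2m ↑u₀ ↑z₀ ↑w₁ ↑y₀ ↑x₁) - (KP.k1m ↑w₁ ↑u₀ ↑z₀ ↑x₁ ↑y₀)
      + (KP.k1m ↑w₁ ↑u₀ ↑z₀ ↑y₀ ↑x₁) + (KP.k1m ↑z₀ ↑u₀ ↑w₁ ↑x₁ ↑y₀) - (KP.k1m ↑z₀ ↑u₀ ↑w₁ ↑y₀ ↑x₁)
      + (KP.k1m ↑u₀ ↑w₁ ↑y₁ ↑x₁ ↑z₁) - (KP.k2m ↑u₀ ↑w₁ ↑y₁ ↑x₁ ↑z₁) - (KP.k1m ↑u₀ ↑y₁ ↑w₁ ↑x₁ ↑z₁)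
      + (KP.k2m ↑u₀ ↑y₁ ↑w₁ ↑x₁ ↑z₁) - (KP.k1m ↑w₁ ↑u₀ ↑y₁ ↑x₁ ↑z₁) + (KP.k1m ↑w₁ ↑y₁ ↑u₀ ↑x₁ ↑z₁)
      - (KP.k2m ↑w₁ ↑y₁ ↑u₀ ↑x₁ ↑z₁) + (KP.k1m ↑y₁ ↑u₀ ↑w₁ ↑x₁ ↑z₁) - (KP.k2m ↑x₀ ↑y₁ ↑z₀ ↑w₀ ↑u₁)
      - (KP.k1m ↑x₀ ↑w₁ ↑z₀ ↑y₀ ↑u₁) + (KP.k1m ↑x₀ ↑z₀ ↑w₁ ↑y₀ ↑u₁) + (KP.k2m ↑x₀ ↑y₁ ↑w₁ ↑z₁ ↑u₁)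
      + (KP.k1m ↑y₁ ↑w₁ ↑z₀ ↑x₁ ↑u₁) - (KP.k1m ↑y₁ ↑z₀ ↑w₁ ↑x₁ ↑u₁)
  · linear_combination (norm := (simp [reflTp, KantorPair.reflTp₀, KantorPair.reflTp₁]; abel))
      (KP.k1p ↑y₀ ↑w₀ ↑z₁ ↑x₀ ↑u₀) - (KP.k1p ↑y₀ ↑z₁ ↑w₀ ↑x₀ ↑u₀) + (KP.k2p ↑x₁ ↑y₀ ↑w₀ ↑z₀ ↑u₀)
      - (KP.k1p ↑x₁ ↑w₀ ↑z₁ ↑y₁ ↑u₀) + (KP.k1p ↑x₁ ↑z₁ ↑w₀ ↑y₁ ↑u₀) - (KP.k2p ↑x₁ ↑y₀ ↑z₁ ↑w₁ ↑u₀)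
      + (KP.k1p ↑u₁ ↑w₀ ↑y₀ ↑x₀ ↑z₀) - (KP.k2p ↑u₁ ↑w₀ ↑y₀ ↑x₀ ↑z₀) - (KP.k1p ↑u₁ ↑y₀ ↑w₀ ↑x₀ ↑z₀)
      + (KP.k2p ↑u₁ ↑y₀ ↑w₀ ↑x₀ ↑z₀) - (KP.k1p ↑w₀ ↑u₁ ↑y₀ ↑x₀ ↑z₀) + (KP.k1p ↑w₀ ↑y₀ ↑u₁ ↑x₀ ↑z₀)
      - (KP.k2p ↑w₀ ↑y₀ ↑u₁ ↑x₀ ↑z₀) + (KP.k1p ↑y₀ ↑u₁ ↑w₀ ↑x₀ ↑z₀) + (KP.k1p ↑u₁ ↑w₀ ↑z₁ ↑x₀ ↑y₁)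
      - (KP.k2p ↑u₁ ↑w₀ ↑z₁ ↑x₀ ↑y₁) - (KP.k1p ↑u₁ ↑w₀ ↑z₁ ↑y₁ ↑x₀) + (KP.k2p ↑u₁ ↑w₀ ↑z₁ ↑y₁ ↑x₀)
      - (KP.k1p ↑u₁ ↑z₁ ↑w₀ ↑x₀ ↑y₁) + (KP.k2p ↑u₁ ↑z₁ ↑w₀ ↑x₀ ↑y₁) + (KP.k1p ↑u₁ ↑z₁ ↑w₀ ↑y₁ ↑x₀)
      - (KP.k2p ↑u₁ ↑z₁ ↑w₀ ↑y₁ ↑x₀) - (KP.k1p ↑w₀ ↑u₁ ↑z₁ ↑x₀ ↑y₁) + (KP.k1p ↑w₀ ↑u₁ ↑z₁ ↑y₁ ↑x₀)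
      + (KP.k1p ↑z₁ ↑u₁ ↑w₀ ↑x₀ ↑y₁) - (KP.k1p ↑z₁ ↑u₁ ↑w₀ ↑y₁ ↑x₀) - (KP.k1p ↑u₁ ↑w₀ ↑x₁ ↑y₁ ↑z₀)
      + (KP.k2p ↑u₁ ↑w₀ ↑x₁ ↑y₁ ↑z₀) + (KP.k1p ↑u₁ ↑x₁ ↑w₀ ↑y₁ ↑z₀) - (KP.k2p ↑u₁ ↑x₁ ↑w₀ ↑y₁ ↑z₀)
      + (KP.k1p ↑w₀ ↑u₁ ↑x₁ ↑y₁ ↑z₀) - (KP.k1p ↑w₀ ↑x₁ ↑u₁ ↑y₁ ↑z₀) + (KP.k2p ↑w₀ ↑x₁ ↑u₁ ↑y₁ ↑z₀)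
      - (KP.k1p ↑x₁ ↑u₁ ↑w₀ ↑y₁ ↑z₀) - (KP.k1p ↑y₀ ↑z₁ ↑u₁ ↑x₀ ↑w₁) - (KP.k2p ↑x₁ ↑y₀ ↑u₁ ↑w₁ ↑z₀)
      + (KP.k2p ↑x₁ ↑y₀ ↑u₁ ↑z₀ ↑w₁) + (KP.k1p ↑x₁ ↑z₁ ↑u₁ ↑y₁ ↑w₁)

lemma reflTp_k2 (x z u : SP.Qm 0 × SP.Qp 1) (w v : SP.Qp 0 × SP.Qm 1) :
    (SP.reflTp x (SP.swap.reflTp w u v) z - SP.reflTp z (SP.swap.reflTp w u v) x)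
        + SP.reflTp u w (SP.reflTp x v z - SP.reflTp z v x)
      = SP.reflTp (SP.reflTp x w z - SP.reflTp z w x) v u
        - SP.reflTp u v (SP.reflTp x w z - SP.reflTp z w x) := by
  obtain ⟨x₀, x₁⟩ := x
  obtain ⟨z₀, z₁⟩ := z
  obtain ⟨u₀, u₁⟩ := u
  obtain ⟨w₀, w₁⟩ := w
  obtain ⟨v₀, v₁⟩ := v
  ext
  · linear_combination (norm := (simp [reflTp, KantorPair.reflTp₀, KantorPair.reflTp₁]; abel))
      (KP.k2m ↑x₀ ↑z₀ ↑u₀ ↑w₀ ↑v₀) + (KP.k1m ↑u₀ ↑w₁ ↑x₀ ↑z₁ ↑v₀) - (KP.k2m ↑u₀ ↑w₁ ↑x₀ ↑z₁ ↑v₀)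
      - (KP.k1m ↑u₀ ↑x₀ ↑w₁ ↑z₁ ↑v₀) + (KP.k2m ↑u₀ ↑x₀ ↑w₁ ↑z₁ ↑v₀) - (KP.k1m ↑w₁ ↑u₀ ↑x₀ ↑z₁ ↑v₀)
      + (KP.k1m ↑w₁ ↑x₀ ↑u₀ ↑z₁ ↑v₀) - (KP.k2m ↑w₁ ↑x₀ ↑u₀ ↑z₁ ↑v₀) - (KP.k1m ↑u₀ ↑w₁ ↑z₀ ↑x₁ ↑v₀)
      + (KP.k2m ↑u₀ ↑w₁ ↑z₀ ↑x₁ ↑v₀) + (KP.k1m ↑u₀ ↑z₀ ↑w₁ ↑x₁ ↑v₀) - (KP.k2m ↑u₀ ↑z₀ ↑w₁ ↑x₁ ↑v₀)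
      + (KP.k1m ↑w₁ ↑u₀ ↑z₀ ↑x₁ ↑v₀) - (KP.k1m ↑w₁ ↑z₀ ↑u₀ ↑x₁ ↑v₀) + (KP.k2m ↑w₁ ↑z₀ ↑u₀ ↑x₁ ↑v₀)
      - (KP.k1m ↑x₀ ↑u₀ ↑v₁ ↑z₁ ↑w₀) + (KP.k1m ↑z₀ ↑u₀ ↑v₁ ↑x₁ ↑w₀) - (KP.k1m ↑u₀ ↑w₁ ↑v₁ ↑x₁ ↑z₁)
      + (KP.k2m ↑u₀ ↑w₁ ↑v₁ ↑x₁ ↑z₁) + (KP.k1m ↑u₀ ↑w₁ ↑v₁ ↑z₁ ↑x₁) - (KP.k2m ↑u₀ ↑w₁ ↑v₁ ↑z₁ ↑x₁)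
      + (KP.k1m ↑w₁ ↑u₀ ↑v₁ ↑x₁ ↑z₁) - (KP.k1m ↑w₁ ↑u₀ ↑v₁ ↑z₁ ↑x₁) - (KP.k2m ↑x₀ ↑z₀ ↑w₁ ↑u₁ ↑v₀)
      - (KP.k2m ↑x₀ ↑z₀ ↑v₁ ↑u₁ ↑w₀) + (KP.k2m ↑x₀ ↑z₀ ↑v₁ ↑w₀ ↑u₁) + (KP.k1m ↑v₁ ↑w₁ ↑x₀ ↑z₁ ↑u₁)
      - (KP.k2m ↑v₁ ↑w₁ ↑x₀ ↑z₁ ↑u₁) - (KP.k1m ↑v₁ ↑x₀ ↑w₁ ↑z₁ ↑u₁) + (KP.k2m ↑v₁ ↑x₀ ↑w₁ ↑z₁ ↑u₁)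
      - (KP.k1m ↑w₁ ↑v₁ ↑x₀ ↑z₁ ↑u₁) + (KP.k1m ↑w₁ ↑x₀ ↑v₁ ↑z₁ ↑u₁) - (KP.k2m ↑w₁ ↑x₀ ↑v₁ ↑z₁ ↑u₁)
      + (KP.k1m ↑x₀ ↑v₁ ↑w₁ ↑z₁ ↑u₁) - (KP.k1m ↑v₁ ↑w₁ ↑z₀ ↑x₁ ↑u₁) + (KP.k2m ↑v₁ ↑w₁ ↑z₀ ↑x₁ ↑u₁)
      + (KP.k1m ↑v₁ ↑z₀ ↑w₁ ↑x₁ ↑u₁) - (KP.k2m ↑v₁ ↑z₀ ↑w₁ ↑x₁ ↑u₁) + (KP.k1m ↑w₁ ↑v₁ ↑z₀ ↑x₁ ↑u₁)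
      - (KP.k1m ↑w₁ ↑z₀ ↑v₁ ↑x₁ ↑u₁) + (KP.k2m ↑w₁ ↑z₀ ↑v₁ ↑x₁ ↑u₁) - (KP.k1m ↑z₀ ↑v₁ ↑w₁ ↑x₁ ↑u₁)
  · linear_combination (norm := (simp [reflTp, KantorPair.reflTp₀, KantorPair.reflTp₁]; abel))
      -(KP.k1p ↑v₀ ↑w₀ ↑z₁ ↑x₀ ↑u₀) + (KP.k2p ↑v₀ ↑w₀ ↑z₁ ↑x₀ ↑u₀) + (KP.k1p ↑v₀ ↑z₁ ↑w₀ ↑x₀ ↑u₀)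
      - (KP.k2p ↑v₀ ↑z₁ ↑w₀ ↑x₀ ↑u₀) + (KP.k1p ↑w₀ ↑v₀ ↑z₁ ↑x₀ ↑u₀) - (KP.k1p ↑w₀ ↑z₁ ↑v₀ ↑x₀ ↑u₀)
      + (KP.k2p ↑w₀ ↑z₁ ↑v₀ ↑x₀ ↑u₀) - (KP.k1p ↑z₁ ↑v₀ ↑w₀ ↑x₀ ↑u₀) + (KP.k1p ↑v₀ ↑w₀ ↑x₁ ↑z₀ ↑u₀)
      - (KP.k2p ↑v₀ ↑w₀ ↑x₁ ↑z₀ ↑u₀) - (KP.k1p ↑v₀ ↑x₁ ↑w₀ ↑z₀ ↑u₀) + (KP.k2p ↑v₀ ↑x₁ ↑w₀ ↑z₀ ↑u₀)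
      - (KP.k1p ↑w₀ ↑v₀ ↑x₁ ↑z₀ ↑u₀) + (KP.k1p ↑w₀ ↑x₁ ↑v₀ ↑z₀ ↑u₀) - (KP.k2p ↑w₀ ↑x₁ ↑v₀ ↑z₀ ↑u₀)
      + (KP.k1p ↑x₁ ↑v₀ ↑w₀ ↑z₀ ↑u₀) - (KP.k2p ↑x₁ ↑z₁ ↑v₀ ↑u₀ ↑w₁) + (KP.k2p ↑x₁ ↑z₁ ↑v₀ ↑w₁ ↑u₀)
      - (KP.k2p ↑x₁ ↑z₁ ↑w₀ ↑u₀ ↑v₁) - (KP.k1p ↑u₁ ↑w₀ ↑v₀ ↑x₀ ↑z₀) + (KP.k2p ↑u₁ ↑w₀ ↑v₀ ↑x₀ ↑z₀)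
      + (KP.k1p ↑u₁ ↑w₀ ↑v₀ ↑z₀ ↑x₀) - (KP.k2p ↑u₁ ↑w₀ ↑v₀ ↑z₀ ↑x₀) + (KP.k1p ↑w₀ ↑u₁ ↑v₀ ↑x₀ ↑z₀)
      - (KP.k1p ↑w₀ ↑u₁ ↑v₀ ↑z₀ ↑x₀) + (KP.k1p ↑z₁ ↑u₁ ↑v₀ ↑x₀ ↑w₁) - (KP.k1p ↑x₁ ↑u₁ ↑v₀ ↑z₀ ↑w₁)
      - (KP.k1p ↑u₁ ↑w₀ ↑z₁ ↑x₀ ↑v₁) + (KP.k2p ↑u₁ ↑w₀ ↑z₁ ↑x₀ ↑v₁) + (KP.k1p ↑u₁ ↑z₁ ↑w₀ ↑x₀ ↑v₁)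
      - (KP.k2p ↑u₁ ↑z₁ ↑w₀ ↑x₀ ↑v₁) + (KP.k1p ↑w₀ ↑u₁ ↑z₁ ↑x₀ ↑v₁) - (KP.k1p ↑w₀ ↑z₁ ↑u₁ ↑x₀ ↑v₁)
      + (KP.k2p ↑w₀ ↑z₁ ↑u₁ ↑x₀ ↑v₁) + (KP.k1p ↑u₁ ↑w₀ ↑x₁ ↑z₀ ↑v₁) - (KP.k2p ↑u₁ ↑w₀ ↑x₁ ↑z₀ ↑v₁)
      - (KP.k1p ↑u₁ ↑x₁ ↑w₀ ↑z₀ ↑v₁) + (KP.k2p ↑u₁ ↑x₁ ↑w₀ ↑z₀ ↑v₁) - (KP.k1p ↑w₀ ↑u₁ ↑x₁ ↑z₀ ↑v₁)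
      + (KP.k1p ↑w₀ ↑x₁ ↑u₁ ↑z₀ ↑v₁) - (KP.k2p ↑w₀ ↑x₁ ↑u₁ ↑z₀ ↑v₁) + (KP.k2p ↑x₁ ↑z₁ ↑u₁ ↑w₁ ↑v₁)

def reflection : KantorPair K (SP.Qp 0 × SP.Qm 1) (SP.Qm 0 × SP.Qp 1) where
  tm := SP.swap.reflTp
  tp := SP.reflTp
  tm_add₁ := SP.swap.reflTp_add₁
  tm_smul₁ := SP.swap.reflTp_smul₁
  tm_add₂ := SP.swap.reflTp_add₂
  tm_smul₂ := SP.swap.reflTp_smul₂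
  tm_add₃ := SP.swap.reflTp_add₃
  tm_smul₃ := SP.swap.reflTp_smul₃
  tp_add₁ := SP.reflTp_add₁
  tp_smul₁ := SP.reflTp_smul₁
  tp_add₂ := SP.reflTp_add₂
  tp_smul₂ := SP.reflTp_smul₂
  tp_add₃ := SP.reflTp_add₃
  tp_smul₃ := SP.reflTp_smul₃
  k1m := SP.swap.reflTp_k1
  k1p := SP.reflTp_k1
  k2m := SP.swap.reflTp_k2
  k2p := SP.reflTp_k2

lemma isReflection_reflection : IsReflection KP SP SP.reflection :=
  ⟨fun _ _ _ => ⟨rfl, rfl⟩, fun _ _ _ => ⟨rfl, rfl⟩⟩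

lemma cases_of_mem_RefGradP {i : ℤ} {x : SP.Qm 0 × SP.Qp 1}
    (hx : x ∈ RefGradP SP i) : (i = 0 ∧ x.2 = 0) ∨ (i = 1 ∧ x.1 = 0) ∨ x = 0 := by
  unfold RefGradP at hx
  split_ifs at hx <;> simp_all [Submodule.mem_prod]

lemma reflTp_mem_RefGradP {i j k : ℤ} {x z : SP.Qm 0 × SP.Qp 1} {y : SP.Qp 0 × SP.Qm 1}
    (hx : x ∈ RefGradP SP i) (hy : y ∈ RefGradM SP j) (hz : z ∈ RefGradP SP k) :
    SP.reflTp x y z ∈ RefGradP SP (i - j + k) := by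
  rcases SP.cases_of_mem_RefGradP hx with ⟨rfl, _⟩ | ⟨rfl, _⟩ | rfl <;>
  rcases SP.swap.cases_of_mem_RefGradP hy with ⟨rfl, _⟩ | ⟨rfl, _⟩ | rfl <;>
  rcases SP.cases_of_mem_RefGradP hz with ⟨rfl, _⟩ | ⟨rfl, _⟩ | rfl <;>
  unfold RefGradP <;> split_ifs <;>
  simp_all [Submodule.mem_prod, Prod.ext_iff, reflTp, KantorPair.reflTp₀, KantorPair.reflTp₁]

end SPGrading

lemma Submodule.prod_top_bot_sup_prod_bot_top {R M N : Type*} [Semiring R] [AddCommMonoid M]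
    [AddCommMonoid N] [Module R M] [Module R N] :
    (⊤ : Submodule R M).prod (⊥ : Submodule R N) ⊔ (⊥ : Submodule R M).prod ⊤ = ⊤ := by
  simp [Submodule.prod_sup_prod]

lemma Submodule.disjoint_prod_top_bot_prod_bot_top {R M N : Type*} [Semiring R]
    [AddCommMonoid M] [AddCommMonoid N] [Module R M] [Module R N] :
    Disjoint ((⊤ : Submodule R M).prod (⊥ : Submodule R N)) ((⊥ : Submodule R M).prod ⊤) := by
  simp [disjoint_iff, Submodule.prod_inf_prod]

theorem statement11_general {K : Type*} [CommRing K]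
    {Pm Pp : Type*} [AddCommGroup Pm] [AddCommGroup Pp] [Module K Pm] [Module K Pp]
    (KP : KantorPair K Pm Pp) (SP : SPGrading KP) :
    ∃ KPc : KantorPair K ((SP.Qp 0) × (SP.Qm 1)) ((SP.Qm 0) × (SP.Qp 1)),
      IsReflection KP SP KPc ∧
      -- the decomposition P̌ = P̌₀ ⊕ P̌₁ ...
      (RefGradM SP 0 ⊔ RefGradM SP 1 = ⊤) ∧ Disjoint (RefGradM SP 0) (RefGradM SP 1) ∧
      (RefGradP SP 0 ⊔ RefGradP SP 1 = ⊤) ∧ Disjoint (RefGradP SP 0) (RefGradP SP 1) ∧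
      -- ... is an SP-grading of P̌
      (∀ (i j k : ℤ) (x : (SP.Qm 0) × (SP.Qp 1)) (y : (SP.Qp 0) × (SP.Qm 1))
          (z : (SP.Qm 0) × (SP.Qp 1)),
        x ∈ RefGradP SP i → y ∈ RefGradM SP j → z ∈ RefGradP SP k →
          KPc.tp x y z ∈ RefGradP SP (i - j + k)) ∧
      (∀ (i j k : ℤ) (x : (SP.Qp 0) × (SP.Qm 1)) (y : (SP.Qm 0) × (SP.Qp 1))
          (z : (SP.Qp 0) × (SP.Qm 1)),
        x ∈ RefGradM SP i → y ∈ RefGradP SP j → z ∈ RefGradM SP k →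
          KPc.tm x y z ∈ RefGradM SP (i - j + k)) :=
  ⟨SP.reflection, SP.isReflection_reflection,
    Submodule.prod_top_bot_sup_prod_bot_top, Submodule.disjoint_prod_top_bot_prod_bot_top,
    Submodule.prod_top_bot_sup_prod_bot_top, Submodule.disjoint_prod_top_bot_prod_bot_top,
    fun _ _ _ _ _ _ => SP.reflTp_mem_RefGradP, fun _ _ _ _ _ _ => SP.swap.reflTp_mem_RefGradP⟩

/-- Let `P` be an SP-graded Kantor pair.  Then the reflection `P̌`,
with `P̌^σ = P₀^{-σ} ⊕ P₁^σ` and products given by the reflection formula, is a Kantor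
pair, and `P̌₀^σ = P₀^{-σ}`, `P̌₁^σ = P₁^σ` defines an SP-grading of `P̌`. -/
theorem statement11 {K : Type*} [CommRing K] (h6 : IsUnit (6 : K))
    {Pm Pp : Type*} [AddCommGroup Pm] [AddCommGroup Pp] [Module K Pm] [Module K Pp]
    (KP : KantorPair K Pm Pp) (SP : SPGrading KP) :
    ∃ KPc : KantorPair K ((SP.Qp 0) × (SP.Qm 1)) ((SP.Qm 0) × (SP.Qp 1)),
      IsReflection KP SP KPc ∧
      -- the decomposition P̌ = P̌₀ ⊕ P̌₁ ...
      (RefGradM SP 0 ⊔ RefGradM SP 1 = ⊤) ∧ Disjoint (RefGradM SP 0) (RefGradM SP 1) ∧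
      (RefGradP SP 0 ⊔ RefGradP SP 1 = ⊤) ∧ Disjoint (RefGradP SP 0) (RefGradP SP 1) ∧
      -- ... is an SP-grading of P̌
      (∀ (i j k : ℤ) (x : (SP.Qm 0) × (SP.Qp 1)) (y : (SP.Qp 0) × (SP.Qm 1))
          (z : (SP.Qm 0) × (SP.Qp 1)),
        x ∈ RefGradP SP i → y ∈ RefGradM SP j → z ∈ RefGradP SP k →
          KPc.tp x y z ∈ RefGradP SP (i - j + k)) ∧
      (∀ (i j k : ℤ) (x : (SP.Qp 0) × (SP.Qm 1)) (y : (SP.Qm 0) × (SP.Qp 1))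
          (z : (SP.Qp 0) × (SP.Qm 1)),
        x ∈ RefGradM SP i → y ∈ RefGradP SP j → z ∈ RefGradM SP k →
          KPc.tm x y z ∈ RefGradM SP (i - j + k)) :=
  statement11_general KP SP
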